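/- arXiv:2605.02390 — 3 statements merged into one kernel-verified Lean document; each statement's English description precedes it below -/
import Mathlib

section
/- Let z be a standard Gaussian vector in ℝ^m. For any δ ∈ (0,1), with probability at least 1-δ, ‖z‖₂² ≤ m + 2√(m·log(1/δ)) + 2·log(1/δ). -/
/-! Chernoff's method. For a standard Gaussian `g` and `s < 1/2`, `E exp(s g²) = (1 - 2s)^(-1/2)`,
so by independence `P(‖z‖² ≥ a) ≤ exp(-s a) (1 - 2s)^(-m/2)`. The optimal `s` satisfies
`1 - 2s = m / a` and gives the bound `exp((m log(a/m) - (a - m)) / 2)`. Writing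
`a = m (1 + x + x²/2)` with `x = 2 √(t/m)`, which is `a = m + 2 √(m t) + 2 t`, the estimate
`log (1 + x + x²/2) ≤ x` turns the exponent into at most `-t`; take `t = log (1/δ)`. -/

open MeasureTheory ProbabilityTheory Real
open scoped NNReal

lemma Real.log_one_add_add_sq_div_two_le {x : ℝ} (hx : 0 ≤ x) : log (1 + x + x ^ 2 / 2) ≤ x := by
  rw [log_le_iff_le_exp (by positivity)]
  exact quadratic_le_exp_of_nonneg hx

namespace ProbabilityTheory

lemma mgf_sq_gaussianReal {v : ℝ≥0} {s : ℝ} (hs : 2 * v * s < 1) :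
    mgf (fun x ↦ x ^ 2) (gaussianReal 0 v) s = (√(1 - 2 * v * s))⁻¹ := by
  rcases eq_or_ne v 0 with rfl | hv
  · simp [mgf]
  have hc : 0 < 1 - 2 * v * s := by linarith
  have hdens : ∀ x : ℝ, gaussianPDFReal 0 v x • exp (s * x ^ 2)
      = (√(2 * π * v))⁻¹ * exp (-((1 - 2 * v * s) / (2 * v)) * x ^ 2) := by
    intro x
    rw [gaussianPDFReal, smul_eq_mul, mul_assoc, ← exp_add]
    congr 2
    field_simp
    ring
  rw [mgf, integral_gaussianReal_eq_integral_smul hv]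
  simp_rw [hdens]
  rw [integral_const_mul, integral_gaussian, div_div_eq_mul_div, sqrt_div' _ hc.le,
    show π * (2 * v) = 2 * π * v by ring]
  field_simp

variable {Ω ι : Type*} [MeasurableSpace Ω] {μ : Measure Ω} [Fintype ι] {z : ι → Ω → ℝ}

lemma iIndepFun.mgf_sum_sq_of_map_eq_gaussianReal (hindep : iIndepFun z μ) {v : ℝ≥0}
    (hgauss : ∀ i, μ.map (z i) = gaussianReal 0 v) {s : ℝ} (hs : 2 * v * s < 1) :
    mgf (fun ω ↦ ∑ i, z i ω ^ 2) μ s = (√(1 - 2 * v * s))⁻¹ ^ Fintype.card ι := by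
  have hmeas : ∀ i, AEMeasurable (z i) μ := fun i ↦
    .of_map_ne_zero (by rw [hgauss i]; exact IsProbabilityMeasure.ne_zero _)
  have hsq : ∀ i, mgf (fun ω ↦ z i ω ^ 2) μ s = (√(1 - 2 * v * s))⁻¹ := fun i ↦ by
    rw [← mgf_sq_gaussianReal hs, ← hgauss i, mgf_map (hmeas i) (by fun_prop)]
    rfl
  have hsum : (fun ω ↦ ∑ i, z i ω ^ 2) = ∑ i, fun ω ↦ z i ω ^ 2 := by
    ext; simp
  have hindep_sq : iIndepFun (fun i ω ↦ z i ω ^ 2) μ :=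
    hindep.comp (fun _ x ↦ x ^ 2) fun _ ↦ by fun_prop
  rw [hsum, hindep_sq.mgf_sum₀ (fun i ↦ (hmeas i).pow_const 2)]
  simp [hsq]

lemma iIndepFun.measureReal_sum_sq_ge_le (hindep : iIndepFun z μ)
    (hgauss : ∀ i, μ.map (z i) = gaussianReal 0 1) (hι : 0 < Fintype.card ι) {a : ℝ}
    (ha : Fintype.card ι ≤ a) :
    μ.real {ω | a ≤ ∑ i, z i ω ^ 2} ≤
      exp ((Fintype.card ι * log (a / Fintype.card ι) - (a - Fintype.card ι)) / 2) := by
  have := hindep.isProbabilityMeasure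
  set n : ℝ := (Fintype.card ι : ℝ)
  have hn : 0 < n := by positivity
  have ha0 : 0 < a := hn.trans_le ha
  set s := (1 - n / a) / 2
  have hmgf := hindep.mgf_sum_sq_of_map_eq_gaussianReal hgauss (s := s)
    (by rw [NNReal.coe_one, mul_one]; simp only [s]; linarith [div_pos hn ha0])
  rw [NNReal.coe_one, mul_one, show 1 - 2 * s = n / a by ring] at hmgf
  -- a non-integrable exponential would have `mgf = 0`
  have hint : Integrable (fun ω ↦ exp (s * ∑ i, z i ω ^ 2)) μ :=
    mgf_pos_iff.mp (by rw [hmgf]; positivity)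
  have hs0 : 0 ≤ s := by
    simp only [s]; linarith [(div_le_one ha0).mpr ha]
  calc μ.real {ω | a ≤ ∑ i, z i ω ^ 2} ≤ exp (-s * a) * mgf (fun ω ↦ ∑ i, z i ω ^ 2) μ s :=
        measure_ge_le_exp_mul_mgf a hs0 hint
    _ = _ := by
        rw [hmgf, ← sqrt_inv, inv_div, sqrt_eq_rpow, rpow_def_of_pos (div_pos ha0 hn),
          ← exp_nat_mul, ← exp_add]
        congr 1
        simp only [s, n]
        field_simp
        ring

lemma iIndepFun.measure_sum_sq_ge_le (hindep : iIndepFun z μ)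
    (hgauss : ∀ i, μ.map (z i) = gaussianReal 0 1) {t : ℝ} (ht : 0 ≤ t) :
    μ {ω | Fintype.card ι + 2 * √(Fintype.card ι * t) + 2 * t ≤ ∑ i, z i ω ^ 2} ≤
      ENNReal.ofReal (exp (-t)) := by
  have := hindep.isProbabilityMeasure
  set n : ℝ := (Fintype.card ι : ℝ)
  rcases ht.eq_or_lt with rfl | ht
  · simpa using prob_le_one
  rcases (Fintype.card ι).eq_zero_or_pos with hι | hι
  · have hempty : {ω | n + 2 * √(n * t) + 2 * t ≤ ∑ i, z i ω ^ 2} = ∅ := by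
      ext ω
      simpa [n, Fintype.card_eq_zero_iff.mp hι] using ht
    simp [hempty]
  have hn : 0 < n := by positivity
  set v := √(t / n)
  have htv : t = n * v ^ 2 := by simp only [v]; rw [sq_sqrt (by positivity)]; field_simp
  have ha : n + 2 * √(n * t) + 2 * t = n * (1 + 2 * v + (2 * v) ^ 2 / 2) := by
    rw [htv, show n * (n * v ^ 2) = (n * v) ^ 2 by ring, sqrt_sq (by positivity)]
    ring
  have hlog := log_one_add_add_sq_div_two_le (show 0 ≤ 2 * v by positivity)
  rw [← ofReal_measureReal]
  gcongr
  refine (hindep.measureReal_sum_sq_ge_le hgauss hι ?_).trans ?_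
  · rw [ha]; nlinarith [show 0 ≤ v by positivity]
  · rw [exp_le_exp, ha, mul_div_cancel_left₀ _ hn.ne']
    nlinarith

end ProbabilityTheory

theorem laurent_massart_chi_squared_general {Ω : Type*} [MeasurableSpace Ω]
    (μ : Measure Ω) [IsProbabilityMeasure μ]
    (m : ℕ) (z : Fin m → Ω → ℝ)
    (hindep : iIndepFun z μ)
    (hgauss : ∀ i, Measure.map (z i) μ = gaussianReal 0 1)
    (δ : ℝ) (hδ : δ ∈ Set.Ioo (0 : ℝ) 1) :
    ENNReal.ofReal (1 - δ) ≤
      μ {ω | ∑ i, (z i ω) ^ 2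
          ≤ m + 2 * Real.sqrt (m * Real.log (1 / δ)) + 2 * Real.log (1 / δ)} := by
  obtain ⟨hδ0, hδ1⟩ := hδ
  have hδ_eq : exp (-log (1 / δ)) = δ := by rw [one_div, log_inv, neg_neg, exp_log hδ0]
  have htail := hindep.measure_sum_sq_ge_le hgauss (log_nonneg (one_le_one_div hδ0 hδ1.le))
  rw [hδ_eq, Fintype.card_fin] at htail
  set a := (m : ℝ) + 2 * √(m * log (1 / δ)) + 2 * log (1 / δ)
  have hlt : μ {ω | a < ∑ i, z i ω ^ 2} ≤ ENNReal.ofReal δ :=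
    (measure_mono (Set.ofPred_subset_ofPred.mpr fun _ ↦ le_of_lt)).trans htail
  have hcompl : {ω | a < ∑ i, z i ω ^ 2} = {ω | ∑ i, z i ω ^ 2 ≤ a}ᶜ := by
    ext; simp
  calc ENNReal.ofReal (1 - δ) = 1 - ENNReal.ofReal δ := by
        rw [ENNReal.ofReal_sub _ hδ0.le, ENNReal.ofReal_one]
    _ ≤ 1 - μ {ω | a < ∑ i, z i ω ^ 2} := tsub_le_tsub_left hlt 1
    _ ≤ μ {ω | ∑ i, z i ω ^ 2 ≤ a} := by
        rw [tsub_le_iff_right, hcompl, ← measure_univ (μ := μ)]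
        exact measure_univ_le_add_compl _

theorem laurent_massart_chi_squared {Ω : Type*} [MeasurableSpace Ω]
    (μ : Measure Ω) [IsProbabilityMeasure μ]
    (m : ℕ) (z : Fin m → Ω → ℝ)
    (hmeas : ∀ i, Measurable (z i))
    (hindep : iIndepFun z μ)
    (hgauss : ∀ i, Measure.map (z i) μ = gaussianReal 0 1)
    (δ : ℝ) (hδ : δ ∈ Set.Ioo (0 : ℝ) 1) :
    ENNReal.ofReal (1 - δ) ≤
      μ {ω | ∑ i, (z i ω) ^ 2
          ≤ m + 2 * Real.sqrt (m * Real.log (1 / δ)) + 2 * Real.log (1 / δ)} :=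
  laurent_massart_chi_squared_general μ m z hindep hgauss δ hδ
end

section
/- Let Y_full, Y'_full be block matrices with blocks (A, B; C, D) and (A', B'; C', D') respectively, with D, D' invertible, and write ΔA = A - A', etc. To first order in the perturbations, the Schur complements K = A - B D⁻¹ C and K' = A' - B' D'⁻¹ C' satisfy ‖K - K'‖_F ≤ (1 + ‖B‖_op ‖D⁻¹‖_op)·(1 + ‖D⁻¹‖_op ‖C‖_op) · ‖Y_full - Y'_full‖_F + o(‖Y_full - Y'_full‖_F), and in particular ‖K - K'‖_F ≤ (1 + 2‖B‖_op‖D⁻¹‖_op + ‖B‖²_op‖D⁻¹‖²_op)·‖Y_full - Y'_full‖_F to leading order when ‖B‖_op = ‖C‖_op. -/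
open Matrix

/-- The Frobenius norm of a complex matrix. -/
noncomputable def frobNorm {m n : Type*} [Fintype m] [Fintype n]
    (A : Matrix m n ℂ) : ℝ :=
  Real.sqrt (∑ i, ∑ j, ‖A i j‖ ^ 2)

/-- The ℓ2 operator norm of a (possibly rectangular) complex matrix. -/
noncomputable def opNormRect {m n : Type*} [Fintype m] [Fintype n] [DecidableEq n]
    (A : Matrix m n ℂ) : ℝ :=
  ‖LinearMap.toContinuousLinearMap (Matrix.toEuclideanLin A)‖

/-- The Schur complement (Kron reduction) of a block matrix with respect to its
lower-right block. -/
noncomputable def schurC {p q : ℕ}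
    (M : Matrix (Fin p ⊕ Fin q) (Fin p ⊕ Fin q) ℂ) : Matrix (Fin p) (Fin p) ℂ :=
  M.toBlocks₁₁ - M.toBlocks₁₂ * (M.toBlocks₂₂)⁻¹ * M.toBlocks₂₁

open Filter Asymptotics Topology

/-!
Since `D = Y₂₂` is invertible, the Schur complement is differentiable at `Y`, with derivative
`Δ ↦ ΔA - ΔB D⁻¹ C - B D⁻¹ ΔC + B D⁻¹ ΔD D⁻¹ C`. Writing
`(D + ΔD)⁻¹ - D⁻¹ = -D⁻¹ ΔD (D + ΔD)⁻¹`, the remainder becomes a sum of three products, each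
containing one block of `Δ` and one factor that tends to zero with `Δ` by continuity of the
matrix inverse; so it is `o(‖Δ‖_F)`. The derivative is bounded term by term with
`‖ΔX‖_F ≤ ‖Δ‖_F` for each block and `‖P X Q‖_F ≤ ‖P‖_op ‖X‖_F ‖Q‖_op`, and the four bounds add
up to `(1 + ‖B‖_op ‖D⁻¹‖_op)(1 + ‖D⁻¹‖_op ‖C‖_op) ‖Δ‖_F`.
-/

theorem schur_remainder_eq {m n R : Type*} [Fintype n] [DecidableEq n] [CommRing R]
    (A ΔA : Matrix m m R) (B ΔB : Matrix m n R) (C ΔC : Matrix n m R) (D ΔD : Matrix n n R)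
    (hD : IsUnit D.det) (hD' : IsUnit (D + ΔD).det) :
    (A + ΔA - (B + ΔB) * (D + ΔD)⁻¹ * (C + ΔC)) - (A - B * D⁻¹ * C)
        - (ΔA - ΔB * D⁻¹ * C - B * D⁻¹ * ΔC + B * D⁻¹ * ΔD * D⁻¹ * C)
      = -(ΔB * ((D + ΔD)⁻¹ * (C + ΔC) - D⁻¹ * C)) - B * ((D + ΔD)⁻¹ - D⁻¹) * ΔC
        + B * D⁻¹ * ΔD * ((D + ΔD)⁻¹ - D⁻¹) * C := by
  have hinv : (D + ΔD)⁻¹ - D⁻¹ + D⁻¹ * ΔD * (D + ΔD)⁻¹ = 0 := by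
    rw [← neg_sub, Matrix.inv_sub_inv (iff_of_true ((isUnit_iff_isUnit_det D).2 hD)
      ((isUnit_iff_isUnit_det _).2 hD')), add_sub_cancel_left, neg_add_cancel]
  rw [← sub_eq_zero]
  calc _ = -(B * ((D + ΔD)⁻¹ - D⁻¹ + D⁻¹ * ΔD * (D + ΔD)⁻¹) * C) := by
        simp only [Matrix.mul_add, Matrix.add_mul, Matrix.mul_sub, Matrix.sub_mul,
          Matrix.mul_assoc]
        abel
    _ = 0 := by rw [hinv, Matrix.mul_zero, Matrix.zero_mul, neg_zero]

section Norms

variable {l m n k : Type*} [Fintype l] [Fintype m] [Fintype n] [Fintype k]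

section Frobenius

attribute [local instance] Matrix.frobeniusSeminormedAddCommGroup

theorem frobNorm_eq_norm (A : Matrix m n ℂ) : frobNorm A = ‖A‖ := by
  rw [Matrix.frobenius_norm_def, frobNorm, Real.sqrt_eq_rpow]
  norm_num [Real.rpow_natCast]

theorem frobNorm_nonneg (A : Matrix m n ℂ) : 0 ≤ frobNorm A := by
  rw [frobNorm_eq_norm]; exact norm_nonneg A

theorem frobNorm_zero : frobNorm (0 : Matrix m n ℂ) = 0 := by
  rw [frobNorm_eq_norm]; exact norm_zero

theorem frobNorm_add_le (A B : Matrix m n ℂ) : frobNorm (A + B) ≤ frobNorm A + frobNorm B := by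
  simp only [frobNorm_eq_norm]; exact norm_add_le A B

theorem frobNorm_sub_le (A B : Matrix m n ℂ) : frobNorm (A - B) ≤ frobNorm A + frobNorm B := by
  simp only [frobNorm_eq_norm]; exact norm_sub_le A B

theorem frobNorm_neg (A : Matrix m n ℂ) : frobNorm (-A) = frobNorm A := by
  simp only [frobNorm_eq_norm]; exact norm_neg A

theorem frobNorm_mul_le (A : Matrix l m ℂ) (B : Matrix m n ℂ) :
    frobNorm (A * B) ≤ frobNorm A * frobNorm B := by
  simp only [frobNorm_eq_norm]; exact Matrix.frobenius_norm_mul A B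

theorem frobNorm_conjTranspose (A : Matrix m n ℂ) : frobNorm Aᴴ = frobNorm A := by
  simp only [frobNorm_eq_norm]; exact Matrix.frobenius_norm_conjTranspose A

end Frobenius

section L2Operator

open scoped Matrix.Norms.L2Operator

variable [DecidableEq n]

theorem opNormRect_nonneg (A : Matrix m n ℂ) : 0 ≤ opNormRect A := norm_nonneg _

theorem opNormRect_mul_le [DecidableEq m] (A : Matrix l m ℂ) (B : Matrix m n ℂ) :
    opNormRect (A * B) ≤ opNormRect A * opNormRect B :=
  Matrix.l2_opNorm_mul A B

theorem opNormRect_conjTranspose [DecidableEq m] (A : Matrix m n ℂ) :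
    opNormRect Aᴴ = opNormRect A :=
  Matrix.l2_opNorm_conjTranspose A

theorem norm_toLp_mulVec_le (A : Matrix m n ℂ) (v : n → ℂ) :
    ‖WithLp.toLp 2 (A *ᵥ v)‖ ≤ opNormRect A * ‖WithLp.toLp 2 v‖ :=
  Matrix.l2_opNorm_mulVec A (WithLp.toLp 2 v)

end L2Operator

theorem continuous_frobNorm : Continuous (frobNorm : Matrix m n ℂ → ℝ) := by
  unfold frobNorm; fun_prop

theorem sq_frobNorm (A : Matrix m n ℂ) : frobNorm A ^ 2 = ∑ i, ∑ j, ‖A i j‖ ^ 2 :=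
  Real.sq_sqrt (by positivity)

theorem sq_frobNorm_eq_sum_sq_norm_col (A : Matrix m n ℂ) :
    frobNorm A ^ 2 = ∑ j, ‖WithLp.toLp 2 (Aᵀ j)‖ ^ 2 := by
  simp [sq_frobNorm, EuclideanSpace.norm_sq_eq, Finset.sum_comm (γ := m)]

theorem frobNorm_mul_le_opNormRect_mul [DecidableEq m] (A : Matrix l m ℂ)
    (X : Matrix m n ℂ) :
    frobNorm (A * X) ≤ opNormRect A * frobNorm X := by
  refine le_of_pow_le_pow_left₀ two_ne_zero
    (mul_nonneg (opNormRect_nonneg A) (frobNorm_nonneg X)) ?_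
  rw [mul_pow, sq_frobNorm_eq_sum_sq_norm_col, sq_frobNorm_eq_sum_sq_norm_col, Finset.mul_sum]
  refine Finset.sum_le_sum fun j _ => ?_
  rw [← mul_pow]
  exact pow_le_pow_left₀ (norm_nonneg _) (norm_toLp_mulVec_le A (Xᵀ j)) 2

theorem frobNorm_mul_le_mul_opNormRect [DecidableEq m] [DecidableEq n]
    (X : Matrix l m ℂ) (A : Matrix m n ℂ) :
    frobNorm (X * A) ≤ frobNorm X * opNormRect A := by
  rw [← frobNorm_conjTranspose, conjTranspose_mul, ← opNormRect_conjTranspose A,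
    ← frobNorm_conjTranspose X, mul_comm]
  exact frobNorm_mul_le_opNormRect_mul Aᴴ Xᴴ

theorem frobNorm_mul_mul_le [DecidableEq m] [DecidableEq n] [DecidableEq k] (P : Matrix l m ℂ)
    (X : Matrix m n ℂ) (Q : Matrix n k ℂ) :
    frobNorm (P * X * Q) ≤ opNormRect P * frobNorm X * opNormRect Q :=
  (frobNorm_mul_le_mul_opNormRect _ Q).trans <|
    mul_le_mul_of_nonneg_right (frobNorm_mul_le_opNormRect_mul P X) (opNormRect_nonneg Q)

theorem sq_frobNorm_eq_sum_toBlocks (M : Matrix (m ⊕ l) (n ⊕ k) ℂ) :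
    frobNorm M ^ 2 = frobNorm M.toBlocks₁₁ ^ 2 + frobNorm M.toBlocks₁₂ ^ 2
      + frobNorm M.toBlocks₂₁ ^ 2 + frobNorm M.toBlocks₂₂ ^ 2 := by
  simp only [sq_frobNorm, Fintype.sum_sum_type, Finset.sum_add_distrib, toBlocks₁₁, toBlocks₁₂,
    toBlocks₂₁, toBlocks₂₂, of_apply]
  ring

theorem frobNorm_toBlocks₁₁_le (M : Matrix (m ⊕ l) (n ⊕ k) ℂ) :
    frobNorm M.toBlocks₁₁ ≤ frobNorm M :=
  le_of_pow_le_pow_left₀ two_ne_zero (frobNorm_nonneg M) <| by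
    nlinarith [sq_frobNorm_eq_sum_toBlocks M]

theorem frobNorm_toBlocks₁₂_le (M : Matrix (m ⊕ l) (n ⊕ k) ℂ) :
    frobNorm M.toBlocks₁₂ ≤ frobNorm M :=
  le_of_pow_le_pow_left₀ two_ne_zero (frobNorm_nonneg M) <| by
    nlinarith [sq_frobNorm_eq_sum_toBlocks M]

theorem frobNorm_toBlocks₂₁_le (M : Matrix (m ⊕ l) (n ⊕ k) ℂ) :
    frobNorm M.toBlocks₂₁ ≤ frobNorm M :=
  le_of_pow_le_pow_left₀ two_ne_zero (frobNorm_nonneg M) <| by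
    nlinarith [sq_frobNorm_eq_sum_toBlocks M]

theorem frobNorm_toBlocks₂₂_le (M : Matrix (m ⊕ l) (n ⊕ k) ℂ) :
    frobNorm M.toBlocks₂₂ ≤ frobNorm M :=
  le_of_pow_le_pow_left₀ two_ne_zero (frobNorm_nonneg M) <| by
    nlinarith [sq_frobNorm_eq_sum_toBlocks M]

theorem frobNorm_sub_sub_add_le [DecidableEq m] [DecidableEq n] (B : Matrix m n ℂ)
    (X : Matrix n n ℂ) (C : Matrix n m ℂ) (ΔA : Matrix m m ℂ) (ΔB : Matrix m n ℂ)
    (ΔC : Matrix n m ℂ) (ΔD : Matrix n n ℂ) {r : ℝ} (hA : frobNorm ΔA ≤ r)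
    (hB : frobNorm ΔB ≤ r) (hC : frobNorm ΔC ≤ r) (hD : frobNorm ΔD ≤ r) :
    frobNorm (ΔA - ΔB * X * C - B * X * ΔC + B * X * ΔD * X * C)
      ≤ (1 + opNormRect B * opNormRect X) * (1 + opNormRect X * opNormRect C) * r := by
  have hBX : opNormRect (B * X) ≤ opNormRect B * opNormRect X := opNormRect_mul_le B X
  have hXC : opNormRect (X * C) ≤ opNormRect X * opNormRect C := opNormRect_mul_le X C
  have hB₀ := opNormRect_nonneg B
  have hX₀ := opNormRect_nonneg X
  have hC₀ := opNormRect_nonneg C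
  have hr : 0 ≤ r := (frobNorm_nonneg ΔA).trans hA
  have h₁ : frobNorm (ΔB * X * C) ≤ r * (opNormRect X * opNormRect C) := by
    rw [Matrix.mul_assoc]
    exact (frobNorm_mul_le_mul_opNormRect _ _).trans
      (mul_le_mul hB hXC (opNormRect_nonneg _) hr)
  have h₂ : frobNorm (B * X * ΔC) ≤ opNormRect B * opNormRect X * r :=
    (frobNorm_mul_le_opNormRect_mul _ _).trans
      (mul_le_mul hBX hC (frobNorm_nonneg _) (by positivity))
  have h₃ : frobNorm (B * X * ΔD * X * C)
      ≤ opNormRect B * opNormRect X * r * (opNormRect X * opNormRect C) := by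
    rw [Matrix.mul_assoc _ X C]
    exact (frobNorm_mul_mul_le _ _ _).trans (mul_le_mul (mul_le_mul hBX hD (frobNorm_nonneg _)
      (by positivity)) hXC (opNormRect_nonneg _) (by positivity))
  calc frobNorm (ΔA - ΔB * X * C - B * X * ΔC + B * X * ΔD * X * C)
      ≤ frobNorm ΔA + frobNorm (ΔB * X * C) + frobNorm (B * X * ΔC)
        + frobNorm (B * X * ΔD * X * C) :=
        (frobNorm_add_le _ _).trans <| by
          gcongr
          exact (frobNorm_sub_le _ _).trans (by gcongr; exact frobNorm_sub_le _ _)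
    _ ≤ r + r * (opNormRect X * opNormRect C) + opNormRect B * opNormRect X * r
        + opNormRect B * opNormRect X * r * (opNormRect X * opNormRect C) := by
        gcongr
    _ = _ := by ring

end Norms

theorem isLittleO_of_norm_le_mul {α E F : Type*} [Norm E] [SeminormedAddGroup F] {l : Filter α}
    {f : α → E} {g : α → F} {ε : α → ℝ} (hε : Tendsto ε l (𝓝 0))
    (h : ∀ᶠ x in l, ‖f x‖ ≤ ε x * ‖g x‖) :
    f =o[l] g :=
  isLittleO_iff.2 fun _ hc => (h.and (hε.eventually (ge_mem_nhds hc))).mono fun _ hx =>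
    hx.1.trans (mul_le_mul_of_nonneg_right hx.2 (norm_nonneg _))

section Continuity

variable {m n : Type*}

theorem continuous_toBlocks₂₂ :
    Continuous fun M : Matrix (m ⊕ n) (m ⊕ n) ℂ => M.toBlocks₂₂ :=
  continuous_id.matrix_submatrix Sum.inr Sum.inr

theorem continuous_toBlocks₂₁ :
    Continuous fun M : Matrix (m ⊕ n) (m ⊕ n) ℂ => M.toBlocks₂₁ :=
  continuous_id.matrix_submatrix Sum.inr Sum.inl

theorem eventually_isUnit_det_toBlocks₂₂ [Fintype n] [DecidableEq n]
    {Y : Matrix (m ⊕ n) (m ⊕ n) ℂ} (hD : IsUnit Y.toBlocks₂₂.det) :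
    ∀ᶠ M in 𝓝 Y, IsUnit M.toBlocks₂₂.det :=
  continuous_toBlocks₂₂.matrix_det.continuousAt.eventually (Units.isOpen.mem_nhds hD)

theorem continuousAt_inv_toBlocks₂₂ [Fintype n] [DecidableEq n]
    {Y : Matrix (m ⊕ n) (m ⊕ n) ℂ} (hD : IsUnit Y.toBlocks₂₂.det) :
    ContinuousAt (fun M => M.toBlocks₂₂⁻¹) Y :=
  (continuousAt_matrix_inv _ (NormedRing.inverse_continuousAt hD.unit)).comp
    continuous_toBlocks₂₂.continuousAt

end Continuity

section SchurComplement

variable {p q : ℕ}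

noncomputable def schurCDeriv (Y Δ : Matrix (Fin p ⊕ Fin q) (Fin p ⊕ Fin q) ℂ) :
    Matrix (Fin p) (Fin p) ℂ :=
  Δ.toBlocks₁₁ - Δ.toBlocks₁₂ * Y.toBlocks₂₂⁻¹ * Y.toBlocks₂₁
    - Y.toBlocks₁₂ * Y.toBlocks₂₂⁻¹ * Δ.toBlocks₂₁
    + Y.toBlocks₁₂ * Y.toBlocks₂₂⁻¹ * Δ.toBlocks₂₂ * Y.toBlocks₂₂⁻¹ * Y.toBlocks₂₁

theorem frobNorm_schurCDeriv_le (Y Δ : Matrix (Fin p ⊕ Fin q) (Fin p ⊕ Fin q) ℂ) :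
    frobNorm (schurCDeriv Y Δ)
      ≤ (1 + opNormRect Y.toBlocks₁₂ * opNormRect Y.toBlocks₂₂⁻¹)
        * (1 + opNormRect Y.toBlocks₂₂⁻¹ * opNormRect Y.toBlocks₂₁) * frobNorm Δ :=
  frobNorm_sub_sub_add_le _ _ _ _ _ _ _ (frobNorm_toBlocks₁₁_le Δ) (frobNorm_toBlocks₁₂_le Δ)
    (frobNorm_toBlocks₂₁_le Δ) (frobNorm_toBlocks₂₂_le Δ)

theorem schurC_add_sub_sub_schurCDeriv (Y Δ : Matrix (Fin p ⊕ Fin q) (Fin p ⊕ Fin q) ℂ)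
    (hD : IsUnit Y.toBlocks₂₂.det) (hD' : IsUnit (Y + Δ).toBlocks₂₂.det) :
    schurC (Y + Δ) - schurC Y - schurCDeriv Y Δ
      = -(Δ.toBlocks₁₂
            * ((Y + Δ).toBlocks₂₂⁻¹ * (Y + Δ).toBlocks₂₁ - Y.toBlocks₂₂⁻¹ * Y.toBlocks₂₁))
        - Y.toBlocks₁₂ * ((Y + Δ).toBlocks₂₂⁻¹ - Y.toBlocks₂₂⁻¹) * Δ.toBlocks₂₁
        + Y.toBlocks₁₂ * Y.toBlocks₂₂⁻¹ * Δ.toBlocks₂₂ * ((Y + Δ).toBlocks₂₂⁻¹ - Y.toBlocks₂₂⁻¹)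
          * Y.toBlocks₂₁ :=
  schur_remainder_eq _ _ _ _ _ _ _ _ hD hD'

variable {Y : Matrix (Fin p ⊕ Fin q) (Fin p ⊕ Fin q) ℂ}

theorem frobNorm_schurC_add_sub_sub_schurCDeriv_le
    (Δ : Matrix (Fin p ⊕ Fin q) (Fin p ⊕ Fin q) ℂ) (hD : IsUnit Y.toBlocks₂₂.det)
    (hD' : IsUnit (Y + Δ).toBlocks₂₂.det) :
    frobNorm (schurC (Y + Δ) - schurC Y - schurCDeriv Y Δ)
      ≤ (frobNorm ((Y + Δ).toBlocks₂₂⁻¹ * (Y + Δ).toBlocks₂₁ - Y.toBlocks₂₂⁻¹ * Y.toBlocks₂₁)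
          + frobNorm Y.toBlocks₁₂ * frobNorm ((Y + Δ).toBlocks₂₂⁻¹ - Y.toBlocks₂₂⁻¹)
            * (1 + frobNorm Y.toBlocks₂₂⁻¹ * frobNorm Y.toBlocks₂₁)) * frobNorm Δ := by
  rw [schurC_add_sub_sub_schurCDeriv Y Δ hD hD']
  set G := (Y + Δ).toBlocks₂₂⁻¹ * (Y + Δ).toBlocks₂₁ - Y.toBlocks₂₂⁻¹ * Y.toBlocks₂₁
  set E := (Y + Δ).toBlocks₂₂⁻¹ - Y.toBlocks₂₂⁻¹
  have hG := frobNorm_nonneg G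
  have hE := frobNorm_nonneg E
  have hB := frobNorm_nonneg Y.toBlocks₁₂
  have hC := frobNorm_nonneg Y.toBlocks₂₁
  have hX := frobNorm_nonneg Y.toBlocks₂₂⁻¹
  have h₁ : frobNorm (Δ.toBlocks₁₂ * G) ≤ frobNorm Δ.toBlocks₁₂ * frobNorm G :=
    frobNorm_mul_le _ _
  have h₂ : frobNorm (Y.toBlocks₁₂ * E * Δ.toBlocks₂₁)
      ≤ frobNorm Y.toBlocks₁₂ * frobNorm E * frobNorm Δ.toBlocks₂₁ :=
    (frobNorm_mul_le _ _).trans (mul_le_mul_of_nonneg_right (frobNorm_mul_le _ _)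
      (frobNorm_nonneg _))
  have h₃ : frobNorm (Y.toBlocks₁₂ * Y.toBlocks₂₂⁻¹ * Δ.toBlocks₂₂ * E * Y.toBlocks₂₁)
      ≤ frobNorm Y.toBlocks₁₂ * frobNorm Y.toBlocks₂₂⁻¹ * frobNorm Δ.toBlocks₂₂ * frobNorm E
        * frobNorm Y.toBlocks₂₁ := by
    refine (frobNorm_mul_le _ _).trans (mul_le_mul_of_nonneg_right ?_ hC)
    refine (frobNorm_mul_le _ _).trans (mul_le_mul_of_nonneg_right ?_ hE)
    exact (frobNorm_mul_le _ _).trans (mul_le_mul_of_nonneg_right (frobNorm_mul_le _ _)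
      (frobNorm_nonneg _))
  calc _ ≤ frobNorm (Δ.toBlocks₁₂ * G) + frobNorm (Y.toBlocks₁₂ * E * Δ.toBlocks₂₁)
        + frobNorm (Y.toBlocks₁₂ * Y.toBlocks₂₂⁻¹ * Δ.toBlocks₂₂ * E * Y.toBlocks₂₁) := by
        refine (frobNorm_add_le _ _).trans ?_
        gcongr
        exact (frobNorm_sub_le _ _).trans (by rw [frobNorm_neg])
    _ ≤ frobNorm Δ * frobNorm G + frobNorm Y.toBlocks₁₂ * frobNorm E * frobNorm Δ
        + frobNorm Y.toBlocks₁₂ * frobNorm Y.toBlocks₂₂⁻¹ * frobNorm Δ * frobNorm E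
          * frobNorm Y.toBlocks₂₁ := by
        refine add_le_add (add_le_add (h₁.trans ?_) (h₂.trans ?_)) (h₃.trans ?_) <;> gcongr
        exacts [frobNorm_toBlocks₁₂_le Δ, frobNorm_toBlocks₂₁_le Δ, frobNorm_toBlocks₂₂_le Δ]
    _ = _ := by ring

theorem isLittleO_schurC_add_sub_sub_schurCDeriv (hD : IsUnit Y.toBlocks₂₂.det) :
    (fun Δ => frobNorm (schurC (Y + Δ) - schurC Y - schurCDeriv Y Δ))
      =o[𝓝 0] fun Δ => frobNorm Δ := by
  let ε : Matrix (Fin p ⊕ Fin q) (Fin p ⊕ Fin q) ℂ → ℝ := fun M =>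
    frobNorm (M.toBlocks₂₂⁻¹ * M.toBlocks₂₁ - Y.toBlocks₂₂⁻¹ * Y.toBlocks₂₁)
      + frobNorm Y.toBlocks₁₂ * frobNorm (M.toBlocks₂₂⁻¹ - Y.toBlocks₂₂⁻¹)
        * (1 + frobNorm Y.toBlocks₂₂⁻¹ * frobNorm Y.toBlocks₂₁)
  have hY : Tendsto (fun Δ => Y + Δ) (𝓝 0) (𝓝 Y) :=
    (continuous_const_add Y).tendsto' 0 Y (add_zero Y)
  have hε : ContinuousAt ε Y := by
    have := continuousAt_inv_toBlocks₂₂ hD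
    have := continuous_toBlocks₂₁ (m := Fin p) (n := Fin q)
    have := continuous_frobNorm (m := Fin q) (n := Fin p)
    have := continuous_frobNorm (m := Fin q) (n := Fin q)
    fun_prop
  refine isLittleO_of_norm_le_mul (ε := fun Δ => ε (Y + Δ)) ?_ ?_
  · simpa [ε, frobNorm_zero, Function.comp_def] using hε.tendsto.comp hY
  · filter_upwards [hY.eventually (eventually_isUnit_det_toBlocks₂₂ hD)] with Δ hD'
    rw [Real.norm_of_nonneg (frobNorm_nonneg _), Real.norm_of_nonneg (frobNorm_nonneg _)]
    exact frobNorm_schurC_add_sub_sub_schurCDeriv_le Δ hD hD'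

theorem isLittleO_max_frobNorm_schurC_add_sub_sub (hD : IsUnit Y.toBlocks₂₂.det) {c : ℝ}
    (hc : ∀ Δ, frobNorm (schurCDeriv Y Δ) ≤ c * frobNorm Δ) :
    (fun Δ => max (frobNorm (schurC (Y + Δ) - schurC Y) - c * frobNorm Δ) 0)
      =o[𝓝 0] fun Δ => frobNorm Δ := by
  refine IsBigO.trans_isLittleO (IsBigO.of_norm_le fun Δ => ?_)
    (isLittleO_schurC_add_sub_sub_schurCDeriv hD)
  rw [Real.norm_of_nonneg (le_max_right _ _)]
  refine max_le ?_ (frobNorm_nonneg _)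
  have htri := frobNorm_add_le (schurC (Y + Δ) - schurC Y - schurCDeriv Y Δ) (schurCDeriv Y Δ)
  rw [sub_add_cancel] at htri
  linarith [hc Δ]

end SchurComplement

/-- First-order Kron (Schur-complement) perturbation bound: up to `o(‖Δ‖_F)`,
`‖K - K'‖_F ≤ (1 + ‖B‖‖D⁻¹‖)(1 + ‖D⁻¹‖‖C‖)‖Y_full - Y'_full‖_F`, and when
`‖B‖ = ‖C‖` the factor is `1 + 2‖B‖‖D⁻¹‖ + ‖B‖²‖D⁻¹‖²`. -/
theorem kron_perturbation {p q : ℕ}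
    (Yf : Matrix (Fin p ⊕ Fin q) (Fin p ⊕ Fin q) ℂ)
    (hD : IsUnit (Yf.toBlocks₂₂).det) :
    (fun Δ : Matrix (Fin p ⊕ Fin q) (Fin p ⊕ Fin q) ℂ =>
        max (frobNorm (schurC (Yf + Δ) - schurC Yf)
          - (1 + opNormRect Yf.toBlocks₁₂ * opNormRect (Yf.toBlocks₂₂)⁻¹)
            * (1 + opNormRect (Yf.toBlocks₂₂)⁻¹ * opNormRect Yf.toBlocks₂₁)
            * frobNorm Δ) 0)
      =o[nhds 0] (fun Δ => frobNorm Δ) ∧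
    (opNormRect Yf.toBlocks₁₂ = opNormRect Yf.toBlocks₂₁ →
      (fun Δ : Matrix (Fin p ⊕ Fin q) (Fin p ⊕ Fin q) ℂ =>
          max (frobNorm (schurC (Yf + Δ) - schurC Yf)
            - (1 + 2 * opNormRect Yf.toBlocks₁₂ * opNormRect (Yf.toBlocks₂₂)⁻¹
                + opNormRect Yf.toBlocks₁₂ ^ 2 * opNormRect (Yf.toBlocks₂₂)⁻¹ ^ 2)
              * frobNorm Δ) 0)
        =o[nhds 0] (fun Δ => frobNorm Δ)) := by
  refine ⟨isLittleO_max_frobNorm_schurC_add_sub_sub hD (frobNorm_schurCDeriv_le Yf), fun hBC => ?_⟩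
  have hκ : 1 + 2 * opNormRect Yf.toBlocks₁₂ * opNormRect Yf.toBlocks₂₂⁻¹
        + opNormRect Yf.toBlocks₁₂ ^ 2 * opNormRect Yf.toBlocks₂₂⁻¹ ^ 2
      = (1 + opNormRect Yf.toBlocks₁₂ * opNormRect Yf.toBlocks₂₂⁻¹)
        * (1 + opNormRect Yf.toBlocks₂₂⁻¹ * opNormRect Yf.toBlocks₂₁) := by
    rw [← hBC]; ring
  rw [hκ]
  exact isLittleO_max_frobNorm_schurC_add_sub_sub hD (frobNorm_schurCDeriv_le Yf)
end

section
/- Let v ∈ ℂⁿ with V_min ≤ |v_k| ≤ V_max for all k. Define the 2n×2n diagonal matrix D(v) = diag(v₁,…,v_n, conj(v₁),…,conj(v_n)). Then for any two n×n complex matrices Y, Y' with ΔY = Y - Y', the block matrix ΔM̃ = [[diag(Δs/v²), conj(ΔY)],[ΔY, diag(conj(Δs)/conj(v)²)]] arising from the change of injections Δs_k = v_k·conj((ΔY v)_k) satisfies ‖ΔM̃‖_F ≤ √2·(1 + ‖v‖₂/V_min)·‖ΔY‖_F. -/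
open Matrix

set_option maxHeartbeats 1600000

theorem deltaM_frobenius_bound {n : ℕ}
    (v : Fin n → ℂ) (Vmin Vmax : ℝ) (hVmin : 0 < Vmin)
    (hv : ∀ k, Vmin ≤ ‖v k‖ ∧ ‖v k‖ ≤ Vmax)
    (Y Y' : Matrix (Fin n) (Fin n) ℂ) :
    frobNorm
      (Matrix.fromBlocks
        (Matrix.diagonal fun k => (v k * star ((Y - Y').mulVec v k)) / (v k) ^ 2)
        ((Y - Y').map (starRingEnd ℂ))
        (Y - Y')
        (Matrix.diagonal fun k =>
          star (v k * star ((Y - Y').mulVec v k)) / (star (v k)) ^ 2))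
      ≤ Real.sqrt 2 * (1 + Real.sqrt (∑ k, ‖v k‖ ^ 2) / Vmin)
        * frobNorm (Y - Y') := by
  set A := Y - Y' with hA
  set w := A.mulVec v with hw
  set Tv := ∑ k, ‖v k‖ ^ 2 with hTv
  set T := ∑ i, ∑ j, ‖A i j‖ ^ 2 with hT
  have hTnn : 0 ≤ T := Finset.sum_nonneg fun i _ =>
    Finset.sum_nonneg fun j _ => sq_nonneg _
  have hTvnn : 0 ≤ Tv := Finset.sum_nonneg fun k _ => sq_nonneg _
  have hvnorm : ∀ k, ‖v k‖ ≠ 0 := fun k =>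
    ne_of_gt (lt_of_lt_of_le hVmin (hv k).1)
  set c := 1 + Real.sqrt Tv / Vmin with hc
  have hcnn : 0 ≤ c := by positivity
  -- norm of diagonal entries
  have hd1 : ∀ k, ‖(v k * star (w k)) / (v k) ^ 2‖ ^ 2 = ‖w k‖ ^ 2 / ‖v k‖ ^ 2 := by
    intro k
    rw [norm_div, norm_mul, norm_star, norm_pow, sq (‖v k‖),
      mul_div_mul_left _ _ (hvnorm k), div_pow]
    ring
  have hd2 : ∀ k, ‖star (v k * star (w k)) / (star (v k)) ^ 2‖ ^ 2
      = ‖w k‖ ^ 2 / ‖v k‖ ^ 2 := by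
    intro k
    rw [norm_div, norm_star, norm_mul, norm_star, norm_pow, norm_star,
      sq (‖v k‖), mul_div_mul_left _ _ (hvnorm k), div_pow]
    ring
  -- Cauchy-Schwarz row bound
  have hrow : ∀ k, ‖w k‖ ^ 2 ≤ (∑ j, ‖A k j‖ ^ 2) * Tv := by
    intro k
    have h1 : ‖w k‖ ≤ ∑ j, ‖A k j‖ * ‖v j‖ := by
      show ‖∑ j, A k j * v j‖ ≤ _
      refine (norm_sum_le _ _).trans_eq ?_
      exact Finset.sum_congr rfl fun j _ => norm_mul _ _
    calc ‖w k‖ ^ 2 ≤ (∑ j, ‖A k j‖ * ‖v j‖) ^ 2 := by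
          apply pow_le_pow_left₀ (norm_nonneg _) h1
      _ ≤ (∑ j, ‖A k j‖ ^ 2) * Tv :=
          Finset.sum_mul_sq_le_sq_mul_sq _ _ _
  have hdsum : ∑ k, ‖w k‖ ^ 2 / ‖v k‖ ^ 2 ≤ Tv / Vmin ^ 2 * T := by
    have : ∀ k, ‖w k‖ ^ 2 / ‖v k‖ ^ 2 ≤ Tv / Vmin ^ 2 * ∑ j, ‖A k j‖ ^ 2 := by
      intro k
      have hv1 : Vmin ^ 2 ≤ ‖v k‖ ^ 2 := pow_le_pow_left₀ hVmin.le (hv k).1 2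
      have h2 : ‖w k‖ ^ 2 / ‖v k‖ ^ 2 ≤ ‖w k‖ ^ 2 / Vmin ^ 2 :=
        div_le_div_of_nonneg_left (sq_nonneg _) (by positivity) hv1
      refine h2.trans ?_
      rw [div_mul_eq_mul_div, div_le_div_iff_of_pos_right (by positivity)]
      calc ‖w k‖ ^ 2 ≤ (∑ j, ‖A k j‖ ^ 2) * Tv := hrow k
        _ = Tv * ∑ j, ‖A k j‖ ^ 2 := mul_comm _ _
    calc ∑ k, ‖w k‖ ^ 2 / ‖v k‖ ^ 2 ≤ ∑ k, Tv / Vmin ^ 2 * ∑ j, ‖A k j‖ ^ 2 :=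
          Finset.sum_le_sum fun k _ => this k
      _ = Tv / Vmin ^ 2 * T := by rw [hT, Finset.mul_sum]
  -- total squared sum
  have hS : (∑ i, ∑ j, ‖(Matrix.fromBlocks
        (Matrix.diagonal fun k => (v k * star (w k)) / (v k) ^ 2)
        (A.map (starRingEnd ℂ)) A
        (Matrix.diagonal fun k => star (v k * star (w k)) / (star (v k)) ^ 2))
          i j‖ ^ 2)
      = 2 * ∑ k, ‖w k‖ ^ 2 / ‖v k‖ ^ 2 + 2 * T := by
    rw [Fintype.sum_sum_type]
    simp only [Fintype.sum_sum_type, Matrix.fromBlocks_apply₁₁,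
      Matrix.fromBlocks_apply₁₂, Matrix.fromBlocks_apply₂₁, Matrix.fromBlocks_apply₂₂]
    have hdiag1 : ∀ k : Fin n,
        (∑ j, ‖(Matrix.diagonal fun k => (v k * star (w k)) / (v k) ^ 2) k j‖ ^ 2)
        = ‖w k‖ ^ 2 / ‖v k‖ ^ 2 := by
      intro k
      rw [Finset.sum_eq_single k]
      · rw [Matrix.diagonal_apply_eq]; exact hd1 k
      · intro j _ hj
        rw [Matrix.diagonal_apply_ne' _ hj, norm_zero]; ring
      · simp
    have hdiag2 : ∀ k : Fin n,
        (∑ j, ‖(Matrix.diagonal fun k =>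
            star (v k * star (w k)) / (star (v k)) ^ 2) k j‖ ^ 2)
        = ‖w k‖ ^ 2 / ‖v k‖ ^ 2 := by
      intro k
      rw [Finset.sum_eq_single k]
      · rw [Matrix.diagonal_apply_eq]; exact hd2 k
      · intro j _ hj
        rw [Matrix.diagonal_apply_ne' _ hj, norm_zero]; ring
      · simp
    have hmap : (∑ i, ∑ j, ‖(A.map (starRingEnd ℂ)) i j‖ ^ 2) = T := by
      rw [hT]
      refine Finset.sum_congr rfl fun i _ => Finset.sum_congr rfl fun j _ => ?_
      simp [Matrix.map_apply]
    simp_rw [Finset.sum_add_distrib]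
    rw [Finset.sum_congr rfl fun k _ => hdiag1 k,
      Finset.sum_congr rfl fun k _ => hdiag2 k, hmap, ← hT]
    ring
  clear_value A w Tv T c
  -- main bound on squared sum
  have hSle : 2 * (∑ k, ‖w k‖ ^ 2 / ‖v k‖ ^ 2) + 2 * T ≤ 2 * c ^ 2 * T := by
    have hc2 : 1 + Tv / Vmin ^ 2 ≤ c ^ 2 := by
      rw [hc]
      have hs : Real.sqrt Tv ^ 2 = Tv := Real.sq_sqrt hTvnn
      have h0 : 0 ≤ Real.sqrt Tv / Vmin := by positivity
      have hx : (Real.sqrt Tv / Vmin) ^ 2 = Tv / Vmin ^ 2 := by rw [div_pow, hs]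
      nlinarith [hx, h0]
    nlinarith [hdsum, hTnn]
  -- conclude
  have hrhs : Real.sqrt 2 * c * Real.sqrt T = Real.sqrt (2 * c ^ 2 * T) := by
    rw [Real.sqrt_mul (by positivity), Real.sqrt_mul (by norm_num),
      Real.sqrt_sq hcnn]
  unfold frobNorm
  rw [← hT]
  calc Real.sqrt _ = Real.sqrt (2 * (∑ k, ‖w k‖ ^ 2 / ‖v k‖ ^ 2) + 2 * T) := by
        rw [hS]
    _ ≤ Real.sqrt (2 * c ^ 2 * T) := Real.sqrt_le_sqrt hSle
    _ = Real.sqrt 2 * c * Real.sqrt T := hrhs.symm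
end
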